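/- arXiv:1401.0418 — 2 statements merged into one kernel-verified Lean document; each statement's English description precedes it below -/
import Mathlib

section
/- Gauss's formula: the number of monic irreducible polynomials of degree n over F_q equals (1/n) ∑_{d | n} μ(n/d) q^d, where μ is the Möbius function. -/
/-!
Over a field with `q` elements, `X ^ q ^ m - X` is squarefree, and by
`Irreducible.natDegree_dvd_iff_dvd_X_pow_card_pow_sub_X` its monic irreducible factors are exactly
the monic irreducible polynomials whose degree divides `m`. Comparing degrees gives
`∑_{d ∣ m} d N_d = q ^ m`, and Möbius inversion turns this into Gauss's formula.
-/

open Finset ArithmeticFunction Polynomial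

open UniqueFactorizationMonoid in
theorem Polynomial.natDegree_eq_sum_natDegree_normalizedFactors {K : Type*} [Field K]
    [DecidableEq K] {g : K[X]} (hg : Squarefree g) :
    g.natDegree = ∑ P ∈ (normalizedFactors g).toFinset, P.natDegree := by
  have hnodup := (squarefree_iff_nodup_normalizedFactors hg.ne_zero).mp hg
  rw [← natDegree_eq_of_degree_eq
      (degree_eq_degree_of_associated (prod_normalizedFactors hg.ne_zero)),
    natDegree_multiset_prod _ (zero_notMem_normalizedFactors _), Finset.sum,
    Multiset.toFinset_val, hnodup.dedup]

namespace FiniteField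

open UniqueFactorizationMonoid

variable {K : Type*} [Field K] [Finite K]

theorem squarefree_X_pow_card_pow_sub_X {m : ℕ} (hm : m ≠ 0) :
    Squarefree (X ^ Nat.card K ^ m - X : K[X]) := by
  have : Fintype K := Fintype.ofFinite K
  have hchar : ringChar K ∣ Nat.card K :=
    ringChar.dvd (by rw [Nat.card_eq_fintype_card, Nat.cast_card_eq_zero])
  exact (galois_poly_separable _ _ (dvd_pow hchar hm)).squarefree

theorem mem_normalizedFactors_X_pow_card_pow_sub_X [DecidableEq K] {m : ℕ} (hm : m ≠ 0)
    {P : K[X]} :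
    P ∈ normalizedFactors (X ^ Nat.card K ^ m - X) ↔
      P.Monic ∧ Irreducible P ∧ P.natDegree ∣ m := by
  rw [Polynomial.mem_normalizedFactors_iff
    (X_pow_card_pow_sub_X_ne_zero K hm Finite.one_lt_card)]
  constructor
  · rintro ⟨hirr, hmonic, hdvd⟩
    exact ⟨hmonic, hirr, hirr.natDegree_dvd_iff_dvd_X_pow_card_pow_sub_X.mpr hdvd⟩
  · rintro ⟨hmonic, hirr, hdvd⟩
    exact ⟨hirr, hmonic, hirr.natDegree_dvd_iff_dvd_X_pow_card_pow_sub_X.mp hdvd⟩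

theorem sum_divisors_mul_card_monic_irreducible {m : ℕ} (hm : m ≠ 0) :
    ∑ d ∈ m.divisors, d * Nat.card {P : K[X] // P.Monic ∧ Irreducible P ∧ P.natDegree = d} =
      Nat.card K ^ m := by
  classical
  set S := (normalizedFactors (X ^ Nat.card K ^ m - X : K[X])).toFinset
  have hS (P : K[X]) : P ∈ S ↔ P.Monic ∧ Irreducible P ∧ P.natDegree ∣ m := by
    rw [Multiset.mem_toFinset, mem_normalizedFactors_X_pow_card_pow_sub_X hm]
  have hcard (d : ℕ) (hd : d ∣ m) :
      Nat.card {P : K[X] // P.Monic ∧ Irreducible P ∧ P.natDegree = d} =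
        #{P ∈ S | P.natDegree = d} := by
    rw [← Nat.card_eq_finsetCard]
    refine Nat.card_congr (Equiv.subtypeEquivRight fun P => ?_)
    rw [mem_filter, hS]
    constructor
    · rintro ⟨hmonic, hirr, rfl⟩
      exact ⟨⟨hmonic, hirr, hd⟩, rfl⟩
    · rintro ⟨⟨hmonic, hirr, -⟩, hdeg⟩
      exact ⟨hmonic, hirr, hdeg⟩
  calc _ = ∑ d ∈ m.divisors, ∑ P ∈ S with P.natDegree = d, P.natDegree := by
        refine sum_congr rfl fun d hd => ?_
        rw [hcard d (Nat.dvd_of_mem_divisors hd), sum_congr rfl fun P hP => (mem_filter.mp hP).2,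
          sum_const, smul_eq_mul, mul_comm]
    _ = ∑ P ∈ S, P.natDegree :=
        sum_fiberwise_of_maps_to (fun P hP => Nat.mem_divisors.mpr ⟨((hS P).mp hP).2.2, hm⟩) _
    _ = (X ^ Nat.card K ^ m - X : K[X]).natDegree :=
        (natDegree_eq_sum_natDegree_normalizedFactors (squarefree_X_pow_card_pow_sub_X hm)).symm
    _ = Nat.card K ^ m := X_pow_card_pow_sub_X_natDegree_eq K hm Finite.one_lt_card

end FiniteField

/-- Gauss's formula: the number of monic irreducible polynomials of degree `n` over a
finite field with `q` elements equals `(1/n) ∑_{d ∣ n} μ(n/d) q^d`. -/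
theorem gauss_formula {F : Type} [Field F] [Fintype F] (n : ℕ) (hn : 1 ≤ n) :
    (n : ℤ) * (Nat.card {P : Polynomial F // P.Monic ∧ Irreducible P ∧ P.natDegree = n} : ℤ)
      = ∑ d ∈ n.divisors, (moebius (n / d) : ℤ) * (Fintype.card F : ℤ) ^ d := by
  have hsum (m : ℕ) (hm : 0 < m) : ∑ d ∈ m.divisors,
      (d : ℤ) * Nat.card {P : F[X] // P.Monic ∧ Irreducible P ∧ P.natDegree = d} =
        (Fintype.card F : ℤ) ^ m := by
    rw [Fintype.card_eq_nat_card]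
    exact_mod_cast FiniteField.sum_divisors_mul_card_monic_irreducible hm.ne'
  rw [← sum_eq_iff_sum_mul_moebius_eq.mp hsum n hn]
  exact Nat.sum_divisorsAntidiagonal' fun a b => (moebius a : ℤ) * (Fintype.card F : ℤ) ^ b
end

section
/- Quadratic reciprocity for F_q[T] (q odd): if A, B ∈ F_q[T] are nonzero, relatively prime, and monic, then (A/B)(B/A) = (-1)^{((q-1)/2)·deg(A)·deg(B)}, where (·/·) is the Jacobi (quadratic residue) symbol for polynomials. In particular, if q ≡ 1 (mod 4), then (A/B) = (B/A). -/
/-!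
For a monic irreducible `P` of degree `d`, Euler's criterion in the field `F[X] ⧸ (P)` with `q ^ d`
elements gives `(f/P) = f̄ ^ ((q ^ d - 1) / 2) = N(f̄) ^ ((q - 1) / 2)`, and the norm `N(f̄)` down to
`F` is the resultant `Res(P, f)`. Multiplicativity of the resultant then gives
`(A/B) = Res(B, A) ^ ((q - 1) / 2)` for monic `B`, so reciprocity is the symmetry
`Res(A, B) = (-1) ^ (deg A · deg B) Res(B, A)`, together with `(A/B) = ±1` for coprime `A`, `B`.
-/

open scoped Classical in
/-- The quadratic residue (Legendre) symbol `(f/P)` for polynomials over a finite field: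
`0` if `P ∣ f`, `1` if `f` is a square mod `P`, and `-1` otherwise. -/
noncomputable def polyLegendre {F : Type} [Field F] [Fintype F] (f P : Polynomial F) : ℤ :=
  if P ∣ f then 0 else if ∃ g : Polynomial F, P ∣ (g ^ 2 - f) then 1 else -1

/-- The Jacobi symbol `(f/B)` for polynomials, extended multiplicatively over the
irreducible factors of `B`. -/
noncomputable def polyJacobi {F : Type} [Field F] [Fintype F] (f B : Polynomial F) : ℤ :=
  ((UniqueFactorizationMonoid.factors B).map (polyLegendre f)).prod

open Polynomial UniqueFactorizationMonoid

theorem Int.eq_of_isUnit_of_cast_eq {R : Type*} [Ring R] [Nontrivial R] (hR : ringChar R ≠ 2)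
    {u v : ℤ} (hu : IsUnit u) (hv : IsUnit v) (h : (u : R) = v) : u = v := by
  have := Ring.neg_one_ne_one_of_char_ne_two hR
  rcases Int.isUnit_iff.1 hu with rfl | rfl <;> rcases Int.isUnit_iff.1 hv with rfl | rfl <;>
    simp_all [eq_comm]

theorem FiniteField.algebraMap_norm_pow_card_div_two {K L : Type*} [Field K] [Field L]
    [Algebra K L] [Finite L] (hK : ringChar K ≠ 2) (x : L) :
    algebraMap K L (Algebra.norm K x ^ (Nat.card K / 2)) = x ^ (Nat.card L / 2) := by
  have := Finite.of_injective _ (algebraMap K L).injective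
  have := Fintype.ofFinite K
  obtain ⟨j, hj⟩ : Odd (Nat.card K) := by
    rw [Nat.odd_iff, Nat.card_eq_fintype_card]
    have := FiniteField.even_card_iff_char_two.not.1 hK
    omega
  have hj0 : 0 < j := by have : 1 < Nat.card K := Finite.one_lt_card; omega
  obtain ⟨t, ht⟩ : Nat.card K - 1 ∣ Nat.card L - 1 := by
    rw [Module.natCard_eq_pow_finrank (K := K) (V := L)]
    exact Nat.sub_one_dvd_pow_sub_one _ _
  have hL : 0 < Nat.card L := Nat.card_pos
  rw [map_pow, FiniteField.algebraMap_norm_eq_pow, ← pow_mul, ht, hj, Nat.add_sub_cancel,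
    Nat.mul_div_cancel_left _ (by omega)]
  rw [hj, Nat.add_sub_cancel, mul_assoc] at ht
  have hhalf : (2 * j + 1) / 2 = j := by omega
  rw [hhalf, mul_comm t]
  congr 1
  omega

theorem Polynomial.resultant_multiset_prod_left {R : Type*} [CommRing R] [IsDomain R]
    (s : Multiset R[X]) (hs : (0 : R[X]) ∉ s) (g : R[X]) :
    s.prod.resultant g = (s.map (resultant · g)).prod := by
  induction s using Multiset.induction with
  | empty => simp
  | cons f s ih =>
    rw [Multiset.mem_cons, not_or] at hs
    rw [Multiset.prod_cons, Multiset.map_cons, Multiset.prod_cons, ← ih hs.2,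
      natDegree_mul (Ne.symm hs.1) (Multiset.prod_ne_zero hs.2),
      resultant_mul_left _ _ _ _ le_rfl]

theorem Polynomial.resultant_eq_norm_mk {K : Type*} [Field K] [PerfectField K] {P : K[X]}
    (hP : P.Monic) [Fact (Irreducible P)] (f : K[X]) :
    P.resultant f = Algebra.norm K (AdjoinRoot.mk P f) := by
  classical
  let K' := AlgebraicClosure K
  let ι := algebraMap K K'
  have hP0 := hP.ne_zero
  have := (AdjoinRoot.powerBasis hP0).finite
  have hnodup : (P.aroots K').Nodup :=
    nodup_roots (PerfectField.separable_of_irreducible Fact.out).map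
  apply ι.injective
  calc ι (P.resultant f) = ((P.aroots K').map fun β => (f.map ι).eval β).prod := by
        rw [← resultant_map_map, ← natDegree_map (f := ι), ← natDegree_map (p := f) (f := ι),
          resultant_eq_prod_eval _ _ _ le_rfl (IsAlgClosed.splits _), (hP.map ι).leadingCoeff,
          one_pow, one_mul]
    _ = ∏ β : {β // β ∈ P.aroots K'}, (f.map ι).eval β.1 := by
        rw [← Finset.prod_subtype (P.aroots K').toFinset (fun _ => Multiset.mem_toFinset)
          fun β => (f.map ι).eval β, Finset.prod_eq_multiset_prod, Multiset.toFinset_val,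
          hnodup.dedup]
    _ = ∏ σ : AdjoinRoot P →ₐ[K] K', σ (AdjoinRoot.mk P f) := by
        refine (Fintype.prod_equiv (AdjoinRoot.equiv K' K P hP0) _ _ fun σ => ?_).symm
        rw [← AdjoinRoot.aeval_eq, ← aeval_algHom_apply, aeval_def, eval_map]
        -- `AdjoinRoot.equiv` sends `σ` to `σ (AdjoinRoot.root P)`
        rfl
    _ = ι (Algebra.norm K (AdjoinRoot.mk P f)) := (Algebra.norm_eq_prod_embeddings _ _ _).symm

theorem AdjoinRoot.isSquare_mk_iff {K : Type*} [CommRing K] {P f : K[X]} :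
    IsSquare (AdjoinRoot.mk P f) ↔ ∃ g : K[X], P ∣ g ^ 2 - f := by
  constructor
  · rintro ⟨r, hr⟩
    obtain ⟨g, rfl⟩ := AdjoinRoot.mk_surjective r
    exact ⟨g, AdjoinRoot.mk_eq_mk.1 (by rw [map_pow, hr, sq])⟩
  · rintro ⟨g, hg⟩
    exact ⟨AdjoinRoot.mk P g, by rw [← sq, ← map_pow, AdjoinRoot.mk_eq_mk.2 hg]⟩

section

variable {F : Type} [Field F] [Fintype F]

theorem polyLegendre_eq_quadraticChar {P : F[X]} [Fact (Irreducible P)] [Fintype (AdjoinRoot P)]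
    [DecidableEq (AdjoinRoot P)] (f : F[X]) :
    polyLegendre f P = quadraticChar (AdjoinRoot P) (AdjoinRoot.mk P f) := by
  classical
  exact if_congr AdjoinRoot.mk_eq_zero.symm rfl
    (if_congr AdjoinRoot.isSquare_mk_iff.symm rfl rfl)

theorem polyLegendre_of_associated {P Q : F[X]} (h : Associated P Q) (f : F[X]) :
    polyLegendre f P = polyLegendre f Q := by
  classical
  exact if_congr h.dvd_iff_dvd_left rfl
    (if_congr (exists_congr fun _ => h.dvd_iff_dvd_left) rfl rfl)

theorem polyLegendre_isUnit {P f : F[X]} (h : ¬P ∣ f) : IsUnit (polyLegendre f P) := by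
  rw [polyLegendre, if_neg h]
  split_ifs <;> simp

theorem polyLegendre_cast_eq_resultant_pow (hF : ringChar F ≠ 2) {P : F[X]} (hP : P.Monic)
    (hirr : Irreducible P) (f : F[X]) :
    (polyLegendre f P : F) = P.resultant f ^ (Fintype.card F / 2) := by
  classical
  have := Fact.mk hirr
  have := (AdjoinRoot.powerBasis hP.ne_zero).finite
  have : Finite (AdjoinRoot P) := Module.finite_of_finite F
  let := Fintype.ofFinite (AdjoinRoot P)
  apply (algebraMap F (AdjoinRoot P)).injective
  rw [map_intCast, polyLegendre_eq_quadraticChar,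
    quadraticChar_eq_pow_of_char_ne_two' (by rwa [← Algebra.ringChar_eq F]),
    resultant_eq_norm_mk hP, ← Nat.card_eq_fintype_card, ← Nat.card_eq_fintype_card,
    FiniteField.algebraMap_norm_pow_card_div_two hF]

theorem polyJacobi_eq_prod_normalizedFactors [DecidableEq F] (f B : F[X]) :
    polyJacobi f B = ((normalizedFactors B).map (polyLegendre f)).prod := by
  rw [polyJacobi, normalizedFactors, Multiset.map_map]
  exact congrArg _ <| Multiset.map_congr rfl fun P _ =>
    polyLegendre_of_associated (associated_normalize P) f

theorem polyJacobi_cast_eq_resultant_pow (hF : ringChar F ≠ 2) {B : F[X]} (hB : B.Monic)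
    (f : F[X]) : (polyJacobi f B : F) = B.resultant f ^ (Fintype.card F / 2) := by
  classical
  conv_rhs => rw [← hB.normalize_eq_self, ← prod_normalizedFactors_eq hB.ne_zero,
    resultant_multiset_prod_left _ (zero_notMem_normalizedFactors B), ← Multiset.prod_map_pow]
  rw [polyJacobi_eq_prod_normalizedFactors, Int.cast_multiset_prod, Multiset.map_map]
  refine congrArg _ <| Multiset.map_congr rfl fun P hP => ?_
  have hP0 : P ≠ 0 := fun h => zero_notMem_normalizedFactors B (h ▸ hP)
  refine polyLegendre_cast_eq_resultant_pow hF ?_ (irreducible_of_normalized_factor P hP) f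
  exact normalize_normalized_factor P hP ▸ monic_normalize hP0

theorem polyJacobi_isUnit {f B : F[X]} (h : IsCoprime f B) : IsUnit (polyJacobi f B) := by
  refine Multiset.prod_induction IsUnit _ (fun _ _ => IsUnit.mul) isUnit_one fun _ hx => ?_
  obtain ⟨P, hP, rfl⟩ := Multiset.mem_map.1 hx
  exact polyLegendre_isUnit fun hPf =>
    (irreducible_of_factor P hP).not_isUnit (h.isUnit_of_dvd' hPf (dvd_of_mem_factors hP))

end

theorem poly_quadratic_reciprocity_general {F : Type} [Field F] [Fintype F]
    (hq : Odd (Fintype.card F)) (A B : Polynomial F)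
    (hA : A.Monic) (hB : B.Monic) (hAB : IsCoprime A B) :
    polyJacobi A B * polyJacobi B A
        = (-1) ^ (((Fintype.card F - 1) / 2) * A.natDegree * B.natDegree) ∧
      (Fintype.card F % 4 = 1 → polyJacobi A B = polyJacobi B A) := by
  have hF : ringChar F ≠ 2 := by
    rw [Ne, FiniteField.even_card_iff_char_two, ← Nat.even_iff, Nat.not_even_iff_odd]
    exact hq
  have he : (Fintype.card F - 1) / 2 = Fintype.card F / 2 := by
    obtain ⟨k, hk⟩ := hq; omega
  have hJAB := polyJacobi_isUnit hAB
  have hJ : polyJacobi A B * polyJacobi B A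
      = (-1) ^ (((Fintype.card F - 1) / 2) * A.natDegree * B.natDegree) := by
    refine Int.eq_of_isUnit_of_cast_eq hF (hJAB.mul (polyJacobi_isUnit hAB.symm))
      (isUnit_one.neg.pow _) ?_
    have hsq : (polyJacobi A B : F) ^ 2 = 1 := by
      rw [← Int.cast_pow, Int.isUnit_sq hJAB, Int.cast_one]
    rw [Int.cast_mul, polyJacobi_cast_eq_resultant_pow hF hA, resultant_comm A B, mul_pow,
      ← polyJacobi_cast_eq_resultant_pow hF hB, he]
    push_cast
    linear_combination (-1 : F) ^ (Fintype.card F / 2 * A.natDegree * B.natDegree) * hsq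
  refine ⟨hJ, fun h4 => Int.eq_of_mul_eq_one ?_⟩
  rw [hJ, Even.neg_one_pow]
  exact ((Nat.even_iff.2 (by omega)).mul_right _).mul_right _

/-- Quadratic reciprocity for `F_q[T]` with `q` odd: for `A, B` monic, nonzero and
coprime, `(A/B)(B/A) = (-1)^{((q-1)/2)·deg A·deg B}`; in particular if `q ≡ 1 (mod 4)`
then `(A/B) = (B/A)`. -/
theorem poly_quadratic_reciprocity {F : Type} [Field F] [Fintype F]
    (hq : Odd (Fintype.card F)) (A B : Polynomial F) (hA0 : A ≠ 0) (hB0 : B ≠ 0)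
    (hA : A.Monic) (hB : B.Monic) (hAB : IsCoprime A B) :
    polyJacobi A B * polyJacobi B A
        = (-1) ^ (((Fintype.card F - 1) / 2) * A.natDegree * B.natDegree) ∧
      (Fintype.card F % 4 = 1 → polyJacobi A B = polyJacobi B A) :=
  poly_quadratic_reciprocity_general hq A B hA hB hAB
end
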